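/- arXiv:2304.01857 — 10 statements merged into one kernel-verified Lean document; each statement's English description precedes it below -/
import Mathlib

section
/- Consider minimizing the total energy E_tot(π, f_e, f_d, P) subject to T_tot(π, f_e, f_d, P) ≤ T_max, φ(π) ≥ φ_min, π_min ≤ π ≤ 1, 0 < f_e ≤ f_e^max, 0 < f_d ≤ f_d^max, 0 < P ≤ P^max, where κ1 < 0, κ2 > 0, κ3 ≥ 0 (so that φ is strictly increasing on (0,1]) and φ(π_min) ≤ φ_min. If a feasible point (π, f_e, f_d, P) satisfies φ(π) > φ_min, then there exists π' with π_min ≤ π' < π such that (π', f_e, f_d, P) is feasible and E_tot(π', f_e, f_d, P) < E_tot(π, f_e, f_d, P). Consequently, every optimal solution satisfies φ(π) = φ_min. -/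
private lemma aux_time_mono (K S Ce rP p p' : ℝ) (hK : 0 < K) (hS : 0 < S)
    (hCe : 0 ≤ Ce) (hrP : 0 < rP) (hp'0 : 0 ≤ p') (hle : p' ≤ p) :
    K * p' ^ 2 * Ce + K * p' * S / rP ≤ K * p ^ 2 * Ce + K * p * S / rP := by
  gcongr

private lemma aux_energy_mono (K S Ce rP P p p' : ℝ) (hK : 0 < K) (hS : 0 < S)
    (hCe : 0 < Ce) (hrP : 0 < rP) (hP : 0 < P) (hp'0 : 0 < p') (hlt : p' < p) :
    K * p' ^ 2 * Ce + P * (K * p' * S / rP)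
      < K * p ^ 2 * Ce + P * (K * p * S / rP) := by
  have h1 : K * p' ^ 2 * Ce < K * p ^ 2 * Ce := by
    have : p' ^ 2 < p ^ 2 := by nlinarith
    exact mul_lt_mul_of_pos_right (mul_lt_mul_of_pos_left this hK) hCe
  have h2 : P * (K * p' * S / rP) < P * (K * p * S / rP) := by
    apply mul_lt_mul_of_pos_left _ hP
    apply (div_lt_div_iff_of_pos_right hrP).mpr
    nlinarith [mul_lt_mul_of_pos_left hlt (mul_pos hK hS)]
  linarith

/-- In the FAST energy-minimization problem, any feasible point with
slack in the fidelity constraint `φ(π) > φ_min` can be strictly improved by lowering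
the scaling factor; consequently every optimal solution satisfies `φ(π) = φ_min`. -/
theorem fast_fidelity_constraint_tight
    (K S We Wd εe εd B N0 Tmax G : ℝ)
    (hK : 0 < K) (hS : 0 < S) (hWe : 0 < We) (hWd : 0 < Wd)
    (hεe : 0 < εe) (hεd : 0 < εd) (hB : 0 < B) (hN0 : 0 < N0)
    (hTmax : 0 < Tmax) (hG : 0 < G)
    (κ1 κ2 κ3 κ4 φmin πmin femax fdmax Pmax : ℝ)
    (hκ1 : κ1 < 0) (hκ2 : 0 < κ2) (hκ3 : 0 ≤ κ3)
    (hπmin : 0 < πmin) (hπmin1 : πmin ≤ 1)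
    (hfemax : 0 < femax) (hfdmax : 0 < fdmax) (hPmax : 0 < Pmax)
    (φ : ℝ → ℝ) (hφ : ∀ p, φ p = κ1 * Real.log (κ2 / p + κ3) + κ4)
    (hφπmin : φ πmin ≤ φmin)
    (r : ℝ → ℝ) (hr : ∀ P, r P = B * Real.logb 2 (1 + G * P / (N0 * B)))
    (Ttot : ℝ → ℝ → ℝ → ℝ → ℝ)
    (hTtot : ∀ p fe fd P, Ttot p fe fd P
      = K * p ^ 2 * (We / fe + Wd / fd) + K * p * S / r P)
    (Etot : ℝ → ℝ → ℝ → ℝ → ℝ)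
    (hEtot : ∀ p fe fd P, Etot p fe fd P
      = K * p ^ 2 * (εe * fe ^ 2 * We + εd * fd ^ 2 * Wd) + P * (K * p * S / r P))
    (feasible : ℝ → ℝ → ℝ → ℝ → Prop)
    (hfeasible : ∀ p fe fd P, feasible p fe fd P ↔
      Ttot p fe fd P ≤ Tmax ∧ φmin ≤ φ p ∧ πmin ≤ p ∧ p ≤ 1 ∧
      0 < fe ∧ fe ≤ femax ∧ 0 < fd ∧ fd ≤ fdmax ∧ 0 < P ∧ P ≤ Pmax) :
    (∀ p fe fd P, feasible p fe fd P → φmin < φ p →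
      ∃ p', πmin ≤ p' ∧ p' < p ∧ feasible p' fe fd P ∧
        Etot p' fe fd P < Etot p fe fd P) ∧
    (∀ p fe fd P, feasible p fe fd P →
      (∀ p' fe' fd' P', feasible p' fe' fd' P' →
        Etot p fe fd P ≤ Etot p' fe' fd' P') →
      φ p = φmin) := by

  have main : ∀ p fe fd P, feasible p fe fd P → φmin < φ p →
      ∃ p', πmin ≤ p' ∧ p' < p ∧ feasible p' fe fd P ∧
        Etot p' fe fd P < Etot p fe fd P := by
    intro p fe fd P hfeas hslack
    rw [hfeasible] at hfeas
    obtain ⟨hT, hφp, hpπ, hp1, hfe, hfem, hfd, hfdm, hP, hPm⟩ := hfeas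
    have hp0 : 0 < p := lt_of_lt_of_le hπmin hpπ
    have hπltp : πmin < p := by
      rcases lt_or_eq_of_le hpπ with h | h
      · exact h
      · exfalso; rw [← h] at hslack; linarith
    -- continuity of φ at p
    have hcont : ContinuousAt φ p := by
      have : φ = fun x => κ1 * Real.log (κ2 / x + κ3) + κ4 := funext hφ
      rw [this]
      apply ContinuousAt.add _ continuousAt_const
      apply ContinuousAt.mul continuousAt_const
      apply ContinuousAt.comp (Real.continuousAt_log (by positivity))
      exact (continuousAt_const.div continuousAt_id hp0.ne').add continuousAt_const
    obtain ⟨δ, hδ, hball⟩ := Metric.continuousAt_iff.mp hcont (φ p - φmin) (by linarith)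
    obtain ⟨d, hd, hdδ, hdπ⟩ : ∃ d, 0 < d ∧ d ≤ δ ∧ d ≤ p - πmin :=
      ⟨min δ (p - πmin), lt_min hδ (by linarith), min_le_left _ _, min_le_right _ _⟩
    refine ⟨p - d / 2, by linarith, by linarith, ?_, ?_⟩
    · -- feasibility
      have hp'0 : 0 < p - d / 2 := by linarith
      have hφp' : φmin ≤ φ (p - d / 2) := by
        have := hball (x := p - d / 2) (by
          rw [Real.dist_eq]; rw [abs_lt]; constructor <;> [linarith; linarith])
        rw [Real.dist_eq, abs_lt] at this
        linarith [this.1]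
      rw [hfeasible]
      refine ⟨?_, hφp', by linarith, by linarith, hfe, hfem, hfd, hfdm, hP, hPm⟩
      have hrP : 0 < r P := by
        rw [hr]
        have h1 : (1:ℝ) < 1 + G * P / (N0 * B) := by
          have : 0 < G * P / (N0 * B) := by positivity
          linarith
        exact mul_pos hB (Real.logb_pos one_lt_two h1)
      rw [hTtot] at hT ⊢
      have hle := aux_time_mono K S (We / fe + Wd / fd) (r P) p (p - d / 2)
        hK hS (by positivity) hrP (by linarith) (by linarith)
      linarith
    · -- strict energy decrease
      have hrP : 0 < r P := by
        rw [hr]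
        have h1 : (1:ℝ) < 1 + G * P / (N0 * B) := by
          have : 0 < G * P / (N0 * B) := by positivity
          linarith
        exact mul_pos hB (Real.logb_pos one_lt_two h1)
      rw [hEtot, hEtot]
      exact aux_energy_mono K S (εe * fe ^ 2 * We + εd * fd ^ 2 * Wd) (r P) P p
        (p - d / 2) hK hS (by positivity) hrP hP (by linarith) (by linarith)
  refine ⟨main, ?_⟩
  intro p fe fd P hfeas hopt
  have hφp : φmin ≤ φ p := ((hfeasible p fe fd P).mp hfeas).2.1
  rcases lt_or_eq_of_le hφp with h | h
  · exfalso
    obtain ⟨p', _, _, hfeas', hlt⟩ := main p fe fd P hfeas h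
    exact absurd (hopt p' fe fd P hfeas') (not_le.mpr hlt)
  · exact h.symm
end

section
/- Fix π > 0 and define τ1 = ε_e·K³·W_e³·π⁶/T_max², τ2 = B·N0·T_max/G, τ3 = K·π·S/(B·T_max), τ4 = ε_d·K³·W_d³·π⁶/T_max². Let α, β, γ > 0 and set f_e = K·π²·W_e/(α·T_max), f_d = K·π²·W_d/(γ·T_max), and P = (N0·B/G)·(2^{τ3/β} − 1). Then P > 0, the transmission time satisfies T_com = K·π·S/r(P) = β·T_max, the computation times satisfy K·π²·W_e/f_e = α·T_max and K·π²·W_d/f_d = γ·T_max, and the total energy satisfies E_cmp + E_com = τ1/α² + τ2·β·(2^{τ3/β} − 1) + τ4/γ². -/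
/-! The power `P` is the inverse of the Shannon rate formula at spectral efficiency `τ3 / β`:
it makes `1 + GP/(N0·B) = 2^(τ3/β)`, so the logarithm cancels, `r = B·τ3/β` and the transmission
time is `β·T_max`. The remaining claims are algebraic identities in the defining formulas. -/

/-- Transmit power at which the Shannon rate `B·log₂(1 + G·P/(N0·B))` equals `B·x`. -/
noncomputable def powerForSpectralEfficiency (B N0 G x : ℝ) : ℝ := N0 * B / G * (2 ^ x - 1)

lemma powerForSpectralEfficiency_pos {B N0 G x : ℝ} (hB : 0 < B) (hN0 : 0 < N0) (hG : 0 < G)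
    (hx : 0 < x) : 0 < powerForSpectralEfficiency B N0 G x :=
  mul_pos (by positivity) (sub_pos.2 (Real.one_lt_rpow one_lt_two hx))

lemma logb_one_add_powerForSpectralEfficiency {B N0 G : ℝ} (hB : B ≠ 0) (hN0 : N0 ≠ 0)
    (hG : G ≠ 0) (x : ℝ) :
    Real.logb 2 (1 + G * powerForSpectralEfficiency B N0 G x / (N0 * B)) = x := by
  have hsnr : 1 + G * powerForSpectralEfficiency B N0 G x / (N0 * B) = 2 ^ x := by
    unfold powerForSpectralEfficiency
    field_simp
    ring
  rw [hsnr, Real.logb_rpow two_pos (by norm_num)]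

theorem fast_energy_reparametrization_general
    (K S We Wd εe εd B N0 Tmax G π : ℝ)
    (hK : 0 < K) (hS : 0 < S) (hWe : 0 < We) (hWd : 0 < Wd)
    (hB : 0 < B) (hN0 : 0 < N0)
    (hTmax : 0 < Tmax) (hG : 0 < G) (hπ : 0 < π)
    (τ1 τ2 τ3 τ4 : ℝ)
    (hτ1 : τ1 = εe * K ^ 3 * We ^ 3 * π ^ 6 / Tmax ^ 2)
    (hτ2 : τ2 = B * N0 * Tmax / G)
    (hτ3 : τ3 = K * π * S / (B * Tmax))
    (hτ4 : τ4 = εd * K ^ 3 * Wd ^ 3 * π ^ 6 / Tmax ^ 2)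
    (α β γ : ℝ) (hβ : 0 < β)
    (fe fd P : ℝ)
    (hfe : fe = K * π ^ 2 * We / (α * Tmax))
    (hfd : fd = K * π ^ 2 * Wd / (γ * Tmax))
    (hP : P = (N0 * B / G) * ((2 : ℝ) ^ (τ3 / β) - 1))
    (r Tcom Ecmp Ecom : ℝ)
    (hr : r = B * Real.logb 2 (1 + G * P / (N0 * B)))
    (hTcom : Tcom = K * π * S / r)
    (hEcmp : Ecmp = K * π ^ 2 * (εe * fe ^ 2 * We + εd * fd ^ 2 * Wd))
    (hEcom : Ecom = P * Tcom) :
    0 < P ∧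
    Tcom = β * Tmax ∧
    K * π ^ 2 * We / fe = α * Tmax ∧
    K * π ^ 2 * Wd / fd = γ * Tmax ∧
    Ecmp + Ecom = τ1 / α ^ 2 + τ2 * β * ((2 : ℝ) ^ (τ3 / β) - 1) + τ4 / γ ^ 2 := by
  change P = powerForSpectralEfficiency B N0 G (τ3 / β) at hP
  have hx : 0 < τ3 / β := by rw [hτ3]; positivity
  have hr' : r = B * (τ3 / β) := by
    rw [hr, hP, logb_one_add_powerForSpectralEfficiency hB.ne' hN0.ne' hG.ne']
  have hTcom' : Tcom = β * Tmax := by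
    rw [hTcom, hr', hτ3]
    field_simp
  refine ⟨hP ▸ powerForSpectralEfficiency_pos hB hN0 hG hx, hTcom', ?_, ?_, ?_⟩
  · rw [hfe, div_div_cancel₀ (by positivity)]
  · rw [hfd, div_div_cancel₀ (by positivity)]
  · rw [hEcmp, hEcom, hTcom', hfe, hfd, hP, hτ1, hτ2, hτ4, powerForSpectralEfficiency]
    ring

/-- Re-expressing the FAST energy cost via the time-splitting factors
`α, β, γ`: with `f_e = Kπ²W_e/(αT_max)`, `f_d = Kπ²W_d/(γT_max)` and
`P = (N0·B/G)·(2^{τ3/β} − 1)`, one has `P > 0`, `T_com = β·T_max`, the computation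
times equal `α·T_max` and `γ·T_max`, and
`E_cmp + E_com = τ1/α² + τ2·β·(2^{τ3/β} − 1) + τ4/γ²`. -/
theorem fast_energy_reparametrization
    (K S We Wd εe εd B N0 Tmax G π : ℝ)
    (hK : 0 < K) (hS : 0 < S) (hWe : 0 < We) (hWd : 0 < Wd)
    (hεe : 0 < εe) (hεd : 0 < εd) (hB : 0 < B) (hN0 : 0 < N0)
    (hTmax : 0 < Tmax) (hG : 0 < G) (hπ : 0 < π)
    (τ1 τ2 τ3 τ4 : ℝ)
    (hτ1 : τ1 = εe * K ^ 3 * We ^ 3 * π ^ 6 / Tmax ^ 2)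
    (hτ2 : τ2 = B * N0 * Tmax / G)
    (hτ3 : τ3 = K * π * S / (B * Tmax))
    (hτ4 : τ4 = εd * K ^ 3 * Wd ^ 3 * π ^ 6 / Tmax ^ 2)
    (α β γ : ℝ) (hα : 0 < α) (hβ : 0 < β) (hγ : 0 < γ)
    (fe fd P : ℝ)
    (hfe : fe = K * π ^ 2 * We / (α * Tmax))
    (hfd : fd = K * π ^ 2 * Wd / (γ * Tmax))
    (hP : P = (N0 * B / G) * ((2 : ℝ) ^ (τ3 / β) - 1))
    (r Tcom Ecmp Ecom : ℝ)
    (hr : r = B * Real.logb 2 (1 + G * P / (N0 * B)))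
    (hTcom : Tcom = K * π * S / r)
    (hEcmp : Ecmp = K * π ^ 2 * (εe * fe ^ 2 * We + εd * fd ^ 2 * Wd))
    (hEcom : Ecom = P * Tcom) :
    0 < P ∧
    Tcom = β * Tmax ∧
    K * π ^ 2 * We / fe = α * Tmax ∧
    K * π ^ 2 * Wd / fd = γ * Tmax ∧
    Ecmp + Ecom = τ1 / α ^ 2 + τ2 * β * ((2 : ℝ) ^ (τ3 / β) - 1) + τ4 / γ ^ 2 :=
  fast_energy_reparametrization_general K S We Wd εe εd B N0 Tmax G π hK hS hWe hWd hB hN0 hTmax hG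
    hπ τ1 τ2 τ3 τ4 hτ1 hτ2 hτ3 hτ4 α β γ hβ fe fd P hfe hfd hP r Tcom Ecmp Ecom hr hTcom hEcmp hEcom
end

section
/- Let τ1, τ2, τ3, τ4 > 0. The function F(α, β, γ) = τ1/α² + τ2·β·(2^{τ3/β} − 1) + τ4/γ² is strictly convex on the open positive orthant (0,∞)³; in particular it is convex there. -/
open Set Real

/-- Positive scalar multiple of a strictly convex function is strictly convex. -/
lemma strictConvexOn_const_mul {c : ℝ} (hc : 0 < c) {s : Set ℝ} {f : ℝ → ℝ}
    (hf : StrictConvexOn ℝ s f) : StrictConvexOn ℝ s (fun x => c * f x) := by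
  refine ⟨hf.1, fun x hx y hy hxy a b ha hb hab => ?_⟩
  have := hf.2 hx hy hxy ha hb hab
  calc c * f (a • x + b • y) < c * (a * f x + b * f y) := by
        exact mul_lt_mul_of_pos_left (by simpa using this) hc
    _ = a * (c * f x) + b * (c * f y) := by ring

/-- `x ↦ τ / x ^ 2` is strictly convex on `(0, ∞)`. -/
lemma strictConvexOn_div_sq {τ : ℝ} (hτ : 0 < τ) :
    StrictConvexOn ℝ (Ioi (0 : ℝ)) (fun x => τ / x ^ 2) := by
  have h := strictConvexOn_const_mul hτ (strictConvexOn_zpow (m := -2) (by decide) (by decide))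
  have : (fun x : ℝ => τ * x ^ (-2 : ℤ)) = fun x : ℝ => τ / x ^ 2 := by
    funext x
    rw [show ((-2 : ℤ)) = -(2 : ℕ) from rfl, zpow_neg, zpow_natCast, div_eq_mul_inv]
  rwa [this] at h

/-- `β ↦ τ2 * β * (2 ^ (τ3 / β) - 1)` is strictly convex on `(0, ∞)`. -/
lemma strictConvexOn_beta {τ2 τ3 : ℝ} (h2 : 0 < τ2) (h3 : 0 < τ3) :
    StrictConvexOn ℝ (Ioi (0 : ℝ))
      (fun β : ℝ => τ2 * β * ((2 : ℝ) ^ (τ3 / β) - 1)) := by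
  set k : ℝ := Real.log 2 * τ3 with hk
  have hkpos : 0 < k := mul_pos (Real.log_pos one_lt_two) h3
  have hfeq : (fun β : ℝ => τ2 * β * ((2 : ℝ) ^ (τ3 / β) - 1)) =
      fun β : ℝ => τ2 * β * (Real.exp (k / β) - 1) := by
    funext β
    rw [Real.rpow_def_of_pos (by norm_num : (0:ℝ) < 2), hk, mul_div_assoc]
  rw [hfeq]
  set f : ℝ → ℝ := fun β => τ2 * β * (Real.exp (k / β) - 1) with hf
  set f' : ℝ → ℝ := fun β => τ2 * (Real.exp (k / β) * (1 - k / β) - 1) with hf'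
  -- derivative of f
  have hdf : ∀ x : ℝ, x ≠ 0 → HasDerivAt f (f' x) x := by
    intro x hx
    have hinv : HasDerivAt (fun y : ℝ => k / y) (k * -((x ^ 2)⁻¹)) x := by
      simpa [div_eq_mul_inv] using (hasDerivAt_inv hx).const_mul k
    have he : HasDerivAt (fun y : ℝ => Real.exp (k / y))
        (Real.exp (k / x) * (k * -((x ^ 2)⁻¹))) x := hinv.exp
    have hmul := (((hasDerivAt_id x).const_mul τ2).mul (he.sub_const 1))
    refine hmul.congr_deriv ?_
    simp only [hf', id_eq]
    field_simp
    ring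
  -- derivative of f'
  have hdf' : ∀ x : ℝ, x ≠ 0 →
      HasDerivAt f' (τ2 * Real.exp (k / x) * k ^ 2 / x ^ 3) x := by
    intro x hx
    have hinv : HasDerivAt (fun y : ℝ => k / y) (k * -((x ^ 2)⁻¹)) x := by
      simpa [div_eq_mul_inv] using (hasDerivAt_inv hx).const_mul k
    have he : HasDerivAt (fun y : ℝ => Real.exp (k / y))
        (Real.exp (k / x) * (k * -((x ^ 2)⁻¹))) x := hinv.exp
    have h1 : HasDerivAt (fun y : ℝ => 1 - k / y) (-(k * -((x ^ 2)⁻¹))) x :=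
      hinv.const_sub 1
    have hmul := (((he.mul h1).sub_const 1).const_mul τ2)
    refine hmul.congr_deriv ?_
    field_simp
    ring
  apply strictConvexOn_of_deriv2_pos (convex_Ioi 0)
  · intro x hx
    exact (hdf x (ne_of_gt hx)).continuousAt.continuousWithinAt
  · intro x hx
    rw [interior_Ioi] at hx
    have hx0 : (0:ℝ) < x := hx
    have hxne : x ≠ 0 := ne_of_gt hx0
    have hev : deriv f =ᶠ[nhds x] f' := by
      filter_upwards [IsOpen.mem_nhds isOpen_ne hxne] with y hy
      exact (hdf y hy).deriv
    have h2' : deriv (deriv f) x = τ2 * Real.exp (k / x) * k ^ 2 / x ^ 3 := by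
      rw [hev.deriv_eq]
      exact (hdf' x hxne).deriv
    have : deriv^[2] f x = deriv (deriv f) x := by
      simp [Function.iterate_succ, Function.iterate_one]
    rw [this, h2']
    positivity

lemma strictConvexOn_sum3 {f g h : ℝ → ℝ}
    (hf : StrictConvexOn ℝ (Ioi (0 : ℝ)) f)
    (hg : StrictConvexOn ℝ (Ioi (0 : ℝ)) g)
    (hh : StrictConvexOn ℝ (Ioi (0 : ℝ)) h) :
    StrictConvexOn ℝ (Set.Ioi (0 : ℝ) ×ˢ (Set.Ioi (0 : ℝ) ×ˢ Set.Ioi (0 : ℝ)))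
      (fun p : ℝ × ℝ × ℝ => f p.1 + g p.2.1 + h p.2.2) := by
  have hconv : Convex ℝ (Set.Ioi (0 : ℝ) ×ˢ (Set.Ioi (0 : ℝ) ×ˢ Set.Ioi (0 : ℝ))) :=
    (convex_Ioi 0).prod ((convex_Ioi 0).prod (convex_Ioi 0))
  refine ⟨hconv, ?_⟩
  rintro ⟨x1, x2, x3⟩ ⟨hx1, hx2, hx3⟩ ⟨y1, y2, y3⟩ ⟨hy1, hy2, hy3⟩ hxy a b ha hb hab
  simp only [Prod.smul_mk, Prod.mk_add_mk, smul_eq_mul]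
  have hab' := hab
  have hle1 : f (a * x1 + b * y1) ≤ a * f x1 + b * f y1 := by
    simpa using hf.convexOn.2 hx1 hy1 ha.le hb.le hab
  have hle2 : g (a * x2 + b * y2) ≤ a * g x2 + b * g y2 := by
    simpa using hg.convexOn.2 hx2 hy2 ha.le hb.le hab
  have hle3 : h (a * x3 + b * y3) ≤ a * h x3 + b * h y3 := by
    simpa using hh.convexOn.2 hx3 hy3 ha.le hb.le hab
  have hne : x1 ≠ y1 ∨ x2 ≠ y2 ∨ x3 ≠ y3 := by
    by_contra hcon
    push_neg at hcon
    exact hxy (by simp [hcon.1, hcon.2.1, hcon.2.2])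
  have key : f (a * x1 + b * y1) + g (a * x2 + b * y2) + h (a * x3 + b * y3) <
      (a * f x1 + b * f y1) + (a * g x2 + b * g y2) + (a * h x3 + b * h y3) := by
    rcases hne with h1 | h2 | h3
    · have := hf.2 hx1 hy1 h1 ha hb hab
      simp only [smul_eq_mul] at this
      linarith
    · have := hg.2 hx2 hy2 h2 ha hb hab
      simp only [smul_eq_mul] at this
      linarith
    · have := hh.2 hx3 hy3 h3 ha hb hab
      simp only [smul_eq_mul] at this
      linarith
  calc f (a * x1 + b * y1) + g (a * x2 + b * y2) + h (a * x3 + b * y3) <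
      (a * f x1 + b * f y1) + (a * g x2 + b * g y2) + (a * h x3 + b * h y3) := key
    _ = a • (f x1 + g x2 + h x3) + b • (f y1 + g y2 + h y3) := by
      simp [smul_eq_mul]; ring

/-- For `τ1, τ2, τ3, τ4 > 0`, the objective
`F(α,β,γ) = τ1/α² + τ2·β·(2^{τ3/β} − 1) + τ4/γ²` is strictly convex (and hence
convex) on the open positive orthant `(0,∞)³`. -/
theorem fast_objective_strictConvexOn
    (τ1 τ2 τ3 τ4 : ℝ) (h1 : 0 < τ1) (h2 : 0 < τ2) (h3 : 0 < τ3) (h4 : 0 < τ4) :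
    StrictConvexOn ℝ (Set.Ioi (0 : ℝ) ×ˢ (Set.Ioi (0 : ℝ) ×ˢ Set.Ioi (0 : ℝ)))
      (fun p : ℝ × ℝ × ℝ =>
        τ1 / p.1 ^ 2 + τ2 * p.2.1 * ((2 : ℝ) ^ (τ3 / p.2.1) - 1) + τ4 / p.2.2 ^ 2) ∧
    ConvexOn ℝ (Set.Ioi (0 : ℝ) ×ˢ (Set.Ioi (0 : ℝ) ×ˢ Set.Ioi (0 : ℝ)))
      (fun p : ℝ × ℝ × ℝ =>
        τ1 / p.1 ^ 2 + τ2 * p.2.1 * ((2 : ℝ) ^ (τ3 / p.2.1) - 1) + τ4 / p.2.2 ^ 2) := by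
  have hs := strictConvexOn_sum3 (strictConvexOn_div_sq h1)
    (strictConvexOn_beta h2 h3) (strictConvexOn_div_sq h4)
  exact ⟨hs, hs.convexOn⟩
end

section
/- Let τ2, τ3 > 0 and λ > 0, and define g_λ(β) = τ2·2^{τ3/β}·(1 − τ3·ln 2/β) − τ2 + λ for β > 0. Then g_λ is continuous and strictly increasing on (0, ∞), g_λ(β) → −∞ as β → 0⁺, and g_λ(β) → λ as β → ∞. Consequently there exists a unique β_λ > 0 such that g_λ(β_λ) = 0. -/
open Filter Set Real

lemma fast_aux_strictAnti (τ2 lam : ℝ) (h2 : 0 < τ2) :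
    StrictAntiOn (fun x : ℝ => τ2 * Real.exp x * (1 - x) - τ2 + lam) (Set.Ici 0) := by
  apply strictAntiOn_of_deriv_neg (convex_Ici 0)
  · fun_prop
  · intro x hx
    rw [interior_Ici] at hx
    have hd : HasDerivAt (fun x : ℝ => τ2 * Real.exp x * (1 - x) - τ2 + lam)
        ((τ2 * Real.exp x) * (1 - x) + (τ2 * Real.exp x) * (-1)) x := by
      exact ((((Real.hasDerivAt_exp x).const_mul τ2).mul
        ((hasDerivAt_id x).const_sub 1)).sub_const τ2).add_const lam
    rw [hd.deriv]
    have := Real.exp_pos x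
    nlinarith [mul_pos (mul_pos h2 this) (Set.mem_Ioi.mp hx)]

/-- For `τ2, τ3, λ > 0`, the function
`g_λ(β) = τ2·2^{τ3/β}·(1 − τ3·ln 2/β) − τ2 + λ` is continuous and strictly
increasing on `(0,∞)`, tends to `−∞` as `β → 0⁺` and to `λ` as `β → ∞`;
consequently it has a unique positive zero. -/
theorem fast_g_unique_zero
    (τ2 τ3 lam : ℝ) (h2 : 0 < τ2) (h3 : 0 < τ3) (hlam : 0 < lam)
    (g : ℝ → ℝ)
    (hg : ∀ β : ℝ, g β
      = τ2 * (2 : ℝ) ^ (τ3 / β) * (1 - τ3 * Real.log 2 / β) - τ2 + lam) :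
    ContinuousOn g (Set.Ioi (0 : ℝ)) ∧
    StrictMonoOn g (Set.Ioi (0 : ℝ)) ∧
    Filter.Tendsto g (nhdsWithin 0 (Set.Ioi (0 : ℝ))) Filter.atBot ∧
    Filter.Tendsto g Filter.atTop (nhds lam) ∧
    ∃! β : ℝ, 0 < β ∧ g β = 0 := by
  set c : ℝ := τ3 * Real.log 2 with hc
  have hcpos : 0 < c := mul_pos h3 (Real.log_pos one_lt_two)
  set F : ℝ → ℝ := fun x => τ2 * Real.exp x * (1 - x) - τ2 + lam with hF
  have hgF : g = fun β => F (c / β) := by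
    funext β
    rw [hg β, hF]
    have : (2 : ℝ) ^ (τ3 / β) = Real.exp (c / β) := by
      rw [Real.rpow_def_of_pos (by norm_num : (0:ℝ) < 2)]
      congr 1
      rw [hc]; ring
    rw [this]
  have hFc : Continuous F := by fun_prop
  have hdiv : ContinuousOn (fun β : ℝ => c / β) (Set.Ioi 0) :=
    continuousOn_const.div continuousOn_id (fun x hx => ne_of_gt hx)
  have hanti := fast_aux_strictAnti τ2 lam h2
  -- continuity
  have hcont : ContinuousOn g (Set.Ioi (0 : ℝ)) := by
    rw [hgF]; exact hFc.comp_continuousOn hdiv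
  -- strict mono
  have hmono : StrictMonoOn g (Set.Ioi (0 : ℝ)) := by
    intro a ha b hb hab
    rw [hgF]
    simp only
    have h1 : c / b < c / a := div_lt_div_of_pos_left hcpos ha hab
    have h2a : (0:ℝ) ≤ c / b := le_of_lt (div_pos hcpos hb)
    have h2b : (0:ℝ) ≤ c / a := le_of_lt (div_pos hcpos ha)
    exact hanti h2a h2b h1
  -- tendsto at 0+
  have hx0 : Filter.Tendsto (fun β : ℝ => c / β) (nhdsWithin 0 (Set.Ioi 0)) Filter.atTop := by
    simp only [div_eq_mul_inv]
    exact Filter.Tendsto.const_mul_atTop hcpos tendsto_inv_nhdsGT_zero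
  have hFbot : Filter.Tendsto F Filter.atTop Filter.atBot := by
    have hb : Filter.Tendsto (fun x : ℝ => (-τ2) * Real.exp x + (-τ2) + lam)
        Filter.atTop Filter.atBot := by
      apply Filter.tendsto_atBot_add_const_right
      apply Filter.tendsto_atBot_add_const_right
      exact (Real.tendsto_exp_atTop).const_mul_atTop_of_neg (neg_neg_iff_pos.mpr h2)
    apply Filter.tendsto_atBot_mono' Filter.atTop _ hb
    filter_upwards [Filter.eventually_ge_atTop (2 : ℝ)] with x hx
    have hex := Real.exp_pos x
    rw [hF]
    simp only
    nlinarith [mul_nonneg (mul_nonneg h2.le hex.le) (by linarith : (0:ℝ) ≤ x - 2)]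
  have htend0 : Filter.Tendsto g (nhdsWithin 0 (Set.Ioi (0 : ℝ))) Filter.atBot := by
    rw [hgF]; exact hFbot.comp hx0
  -- tendsto at top
  have hxtop : Filter.Tendsto (fun β : ℝ => c / β) Filter.atTop (nhds 0) :=
    Filter.Tendsto.div_atTop tendsto_const_nhds Filter.tendsto_id
  have hF0 : F 0 = lam := by rw [hF]; simp
  have htendtop : Filter.Tendsto g Filter.atTop (nhds lam) := by
    rw [hgF]
    have := (hFc.continuousAt (x := 0)).tendsto.comp hxtop
    rwa [hF0] at this
  refine ⟨hcont, hmono, htend0, htendtop, ?_⟩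
  -- existence of a point with g a < 0
  obtain ⟨a, ha0, hga⟩ : ∃ a : ℝ, a ∈ Set.Ioi (0:ℝ) ∧ g a < 0 := by
    have h1 : ∀ᶠ β in nhdsWithin 0 (Set.Ioi (0:ℝ)), g β < 0 :=
      htend0.eventually (Filter.eventually_lt_atBot 0)
    have h2' : ∀ᶠ β in nhdsWithin 0 (Set.Ioi (0:ℝ)), β ∈ Set.Ioi (0:ℝ) :=
      self_mem_nhdsWithin
    exact (h2'.and h1).exists
  obtain ⟨b, hab, hgb⟩ : ∃ b : ℝ, a < b ∧ 0 < g b := by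
    have h1 : ∀ᶠ β in Filter.atTop, (0:ℝ) < g β :=
      htendtop.eventually (eventually_gt_nhds hlam)
    have h2' : ∀ᶠ β : ℝ in Filter.atTop, a < β := Filter.eventually_gt_atTop a
    exact (h2'.and h1).exists
  have hb0 : b ∈ Set.Ioi (0:ℝ) := lt_trans ha0 hab
  have hsub : Set.Icc a b ⊆ Set.Ioi (0:ℝ) := fun x hx => lt_of_lt_of_le ha0 hx.1
  obtain ⟨β, hβmem, hβ⟩ : ∃ β ∈ Set.Icc a b, g β = 0 := by
    have := intermediate_value_Icc (le_of_lt hab) (hcont.mono hsub)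
    exact this ⟨le_of_lt hga, le_of_lt hgb⟩
  refine ⟨β, ⟨hsub hβmem, hβ⟩, ?_⟩
  rintro β' ⟨hβ'0, hβ'⟩
  exact hmono.injOn (Set.mem_Ioi.mpr hβ'0) (hsub hβmem) (by rw [hβ', hβ])
end

section
/- Let τ2, τ3 > 0. For each λ > 0 let β_λ > 0 be the unique zero of g_λ(β) = τ2·2^{τ3/β}·(1 − τ3·ln 2/β) − τ2 + λ on (0,∞). Then the map λ ↦ β_λ is strictly decreasing on (0, ∞), β_λ → 0 as λ → ∞, and β_λ → ∞ as λ → 0⁺. -/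
/-! Substituting `x = c / β` with `c = τ3 ln 2` turns `g_λ(β) = 0` into `e^x (1 - x) = 1 - λ / τ2`.
The left side is strictly decreasing in `x ≥ 0` and equals `1` at `x = 0`, so `h β := e^{c/β} (1 - c/β)`
is strictly increasing on `β > 0`, stays below `1`, and `h (β_λ) = 1 - λ / τ2`. Hence `β_λ` decreases in `λ`, and
it must leave every `[ε, ∞)` as `1 - λ / τ2 → -∞` and every `(0, M]` as `1 - λ / τ2 → 1`. -/

open Real Filter Set Topology

lemma strictAntiOn_exp_mul_one_sub : StrictAntiOn (fun x : ℝ => exp x * (1 - x)) (Ici 0) := by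
  apply strictAntiOn_of_deriv_neg (convex_Ici 0) (by fun_prop)
  intro x hx
  rw [interior_Ici] at hx
  have hderiv : HasDerivAt (fun x : ℝ => exp x * (1 - x)) (-x * exp x) x :=
    ((hasDerivAt_exp x).fun_mul ((hasDerivAt_const x 1).fun_sub (hasDerivAt_id' x))).congr_deriv
      (by ring)
  rw [hderiv.deriv]
  exact mul_neg_of_neg_of_pos (neg_neg_of_pos hx) (exp_pos x)

lemma strictMonoOn_exp_div_mul_one_sub_div {c : ℝ} (hc : 0 < c) :
    StrictMonoOn (fun β : ℝ => exp (c / β) * (1 - c / β)) (Ioi 0) :=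
  strictAntiOn_exp_mul_one_sub.comp (fun _ ha _ _ hab => div_lt_div_of_pos_left hc ha hab)
    fun _ hβ => (div_pos hc hβ).le

lemma exp_div_mul_one_sub_div_lt_one {c β : ℝ} (hc : 0 < c) (hβ : 0 < β) :
    exp (c / β) * (1 - c / β) < 1 := by
  simpa using strictAntiOn_exp_mul_one_sub self_mem_Ici (div_pos hc hβ).le (div_pos hc hβ)

section

variable {α : Type*} {l : Filter α}

lemma StrictMonoOn.tendsto_nhds_zero_of_tendsto_comp_atBot {h : ℝ → ℝ} {u : α → ℝ}
    (hh : StrictMonoOn h (Ioi 0)) (hu : ∀ᶠ x in l, 0 < u x) (hhu : Tendsto (h ∘ u) l atBot) :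
    Tendsto u l (𝓝 0) := by
  refine tendsto_order.2 ⟨fun a ha => hu.mono fun x hx => ha.trans hx, fun ε hε => ?_⟩
  filter_upwards [hu, hhu.eventually_lt_atBot (h ε)] with x hx hhx
  exact (hh.lt_iff_lt hx hε).1 hhx

lemma StrictMonoOn.tendsto_atTop_of_tendsto_comp_nhds {h : ℝ → ℝ} {u : α → ℝ} {b : ℝ}
    (hh : StrictMonoOn h (Ioi 0)) (hb : ∀ β, 0 < β → h β < b) (hu : ∀ᶠ x in l, 0 < u x)
    (hhu : Tendsto (h ∘ u) l (𝓝 b)) : Tendsto u l atTop := by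
  refine tendsto_atTop.2 fun M => ?_
  have hM : (0 : ℝ) < max M 1 := lt_max_of_lt_right one_pos
  filter_upwards [hu, hhu.eventually_const_lt (hb _ hM)] with x hx hhx
  exact (le_max_left M 1).trans ((hh.lt_iff_lt hM hx).1 hhx).le

end

/-- Let `β_λ` denote the unique positive zero of
`g_λ(β) = τ2·2^{τ3/β}·(1 − τ3·ln 2/β) − τ2 + λ`. Then `λ ↦ β_λ` is strictly
decreasing on `(0,∞)`, tends to `0` as `λ → ∞` and to `∞` as `λ → 0⁺`. -/
theorem fast_beta_lambda_monotone
    (τ2 τ3 : ℝ) (h2 : 0 < τ2) (h3 : 0 < τ3)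
    (βof : ℝ → ℝ)
    (hβof : ∀ lam : ℝ, 0 < lam → 0 < βof lam ∧
      τ2 * (2 : ℝ) ^ (τ3 / βof lam) * (1 - τ3 * Real.log 2 / βof lam) - τ2 + lam
        = 0) :
    StrictAntiOn βof (Set.Ioi (0 : ℝ)) ∧
    Filter.Tendsto βof Filter.atTop (nhds 0) ∧
    Filter.Tendsto βof (nhdsWithin 0 (Set.Ioi (0 : ℝ))) Filter.atTop := by
  set c := τ3 * log 2
  have hc : 0 < c := mul_pos h3 (log_pos one_lt_two)
  set h := fun β : ℝ => exp (c / β) * (1 - c / β)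
  have hh : StrictMonoOn h (Ioi 0) := strictMonoOn_exp_div_mul_one_sub_div hc
  have h_βof : ∀ lam, 0 < lam → h (βof lam) = 1 - lam / τ2 := by
    intro lam hlam
    obtain ⟨-, hzero⟩ := hβof lam hlam
    rw [rpow_def_of_pos two_pos, mul_div_assoc', mul_comm (log 2)] at hzero
    field_simp
    linear_combination hzero
  have hpos : ∀ l : Filter ℝ, (∀ᶠ lam in l, 0 < lam) → ∀ᶠ lam in l, 0 < βof lam :=
    fun l hl => hl.mono fun lam hlam => (hβof lam hlam).1
  refine ⟨fun a ha b hb hab => (hh.lt_iff_lt (hβof b hb).1 (hβof a ha).1).1 ?_, ?_, ?_⟩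
  · rw [h_βof a ha, h_βof b hb]
    gcongr
  · refine hh.tendsto_nhds_zero_of_tendsto_comp_atBot (hpos _ (eventually_gt_atTop 0)) ?_
    refine (tendsto_atBot_add_const_left _ 1 (tendsto_neg_atTop_atBot.comp
      (tendsto_id.atTop_div_const h2))).congr' ?_
    filter_upwards [eventually_gt_atTop 0] with lam hlam
    exact (h_βof lam hlam).symm
  · refine hh.tendsto_atTop_of_tendsto_comp_nhds (fun β hβ => exp_div_mul_one_sub_div_lt_one hc hβ)
      (hpos _ self_mem_nhdsWithin) ?_
    refine Tendsto.congr' ?_ (by simpa using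
      (((tendsto_id (x := 𝓝 (0 : ℝ))).div_const τ2).const_sub 1).mono_left nhdsWithin_le_nhds)
    filter_upwards [self_mem_nhdsWithin] with lam hlam
    exact (h_βof lam hlam).symm
end

section
/- Let τ2, τ3 > 0, λ > 0, and let β_λ > 0 be the unique zero of g_λ(β) = τ2·2^{τ3/β}·(1 − τ3·ln 2/β) − τ2 + λ. Then β_λ is the unique minimizer over (0, ∞) of the function β ↦ τ2·β·(2^{τ3/β} − 1) + λ·β. -/
/-!
The cost has derivative `g_λ`, and `g_λ' β = τ2·2^{τ3/β}·(τ3·ln 2)²/β³ > 0`. So the cost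
decreases strictly on `(0, β_λ]` and increases strictly on `[β_λ, ∞)`.
-/

open Real Set

theorem lt_of_hasDerivAt_of_strictMonoOn {f f' : ℝ → ℝ} {s : Set ℝ} {a : ℝ}
    (hs : s.OrdConnected) (hf : ∀ x ∈ s, HasDerivAt f (f' x) x) (hf' : StrictMonoOn f' s)
    (ha : a ∈ s) (hfa : f' a = 0) {x : ℝ} (hx : x ∈ s) (hxa : x ≠ a) : f a < f x := by
  have hcont : ∀ {u v}, u ∈ s → v ∈ s → ContinuousOn f (Icc u v) := fun hu hv y hy =>
    (hf y (hs.out hu hv hy)).continuousAt.continuousWithinAt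
  rcases hxa.lt_or_gt with hlt | hgt
  · refine strictAntiOn_of_deriv_neg (convex_Icc x a) (hcont hx ha) (fun y hy => ?_)
      (left_mem_Icc.2 hlt.le) (right_mem_Icc.2 hlt.le) hlt
    rw [interior_Icc] at hy
    have hys : y ∈ s := hs.out hx ha (Ioo_subset_Icc_self hy)
    rw [(hf y hys).deriv, ← hfa]
    exact hf' hys ha hy.2
  · refine strictMonoOn_of_deriv_pos (convex_Icc a x) (hcont ha hx) (fun y hy => ?_)
      (left_mem_Icc.2 hgt.le) (right_mem_Icc.2 hgt.le) hgt
    rw [interior_Icc] at hy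
    have hys : y ∈ s := hs.out ha hx (Ioo_subset_Icc_self hy)
    rw [(hf y hys).deriv, ← hfa]
    exact hf' ha hys hy.1

theorem hasDerivAt_rpow_div {b : ℝ} (hb : 0 < b) (c : ℝ) {x : ℝ} (hx : x ≠ 0) :
    HasDerivAt (fun y => b ^ (c / y)) (-(b ^ (c / x) * log b * c / x ^ 2)) x := by
  have hdiv : HasDerivAt (fun y => c / y) (-(c / x ^ 2)) x := by
    simpa [div_eq_mul_inv] using (hasDerivAt_inv hx).const_mul c
  exact ((hasStrictDerivAt_const_rpow hb (c / x)).hasDerivAt.comp x hdiv).congr_deriv (by ring)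

namespace FastBeta

variable (τ2 τ3 lam : ℝ)

noncomputable def cost (β : ℝ) : ℝ := τ2 * β * ((2 : ℝ) ^ (τ3 / β) - 1) + lam * β

noncomputable def g (β : ℝ) : ℝ := τ2 * (2 : ℝ) ^ (τ3 / β) * (1 - τ3 * log 2 / β) - τ2 + lam

theorem hasDerivAt_cost {β : ℝ} (hβ : β ≠ 0) : HasDerivAt (cost τ2 τ3 lam) (g τ2 τ3 lam β) β := by
  refine ((((hasDerivAt_id' β).const_mul τ2).mul
    ((hasDerivAt_rpow_div two_pos τ3 hβ).sub_const 1)).add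
      ((hasDerivAt_id' β).const_mul lam)).congr_deriv ?_
  simp only [g]
  field_simp
  ring

theorem hasDerivAt_g {β : ℝ} (hβ : β ≠ 0) :
    HasDerivAt (g τ2 τ3 lam) (τ2 * (2 : ℝ) ^ (τ3 / β) * (τ3 * log 2) ^ 2 / β ^ 3) β := by
  have hdiv : HasDerivAt (fun y => τ3 * log 2 / y) (-(τ3 * log 2 / β ^ 2)) β := by
    simpa [div_eq_mul_inv] using (hasDerivAt_inv hβ).const_mul (τ3 * log 2)
  refine ((((hasDerivAt_rpow_div two_pos τ3 hβ).const_mul τ2).mul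
    (hdiv.const_sub 1)).sub_const τ2).add_const lam |>.congr_deriv ?_
  field_simp
  ring

theorem strictMonoOn_g (h2 : 0 < τ2) (h3 : τ3 ≠ 0) : StrictMonoOn (g τ2 τ3 lam) (Ioi 0) := by
  refine strictMonoOn_of_deriv_pos (convex_Ioi 0)
    (fun x hx => (hasDerivAt_g τ2 τ3 lam (ne_of_gt hx)).continuousAt.continuousWithinAt)
    (fun x hx => ?_)
  rw [interior_Ioi] at hx
  have hx : 0 < x := hx
  rw [(hasDerivAt_g τ2 τ3 lam hx.ne').deriv]
  positivity

end FastBeta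

open FastBeta in
theorem fast_beta_lambda_unique_minimizer_general
    (τ2 τ3 lam : ℝ) (h2 : 0 < τ2) (h3 : 0 < τ3)
    (βl : ℝ) (hβl : 0 < βl)
    (hzero : τ2 * (2 : ℝ) ^ (τ3 / βl) * (1 - τ3 * Real.log 2 / βl) - τ2 + lam = 0) :
    ∀ β : ℝ, 0 < β → β ≠ βl →
      τ2 * βl * ((2 : ℝ) ^ (τ3 / βl) - 1) + lam * βl
        < τ2 * β * ((2 : ℝ) ^ (τ3 / β) - 1) + lam * β :=
  fun _β hβ hne => lt_of_hasDerivAt_of_strictMonoOn ordConnected_Ioi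
    (fun _x hx => hasDerivAt_cost τ2 τ3 lam (ne_of_gt hx)) (strictMonoOn_g τ2 τ3 lam h2 h3.ne')
    hβl hzero hβ hne

/-- The unique positive zero `β_λ` of
`g_λ(β) = τ2·2^{τ3/β}·(1 − τ3·ln 2/β) − τ2 + λ` is the unique minimizer over
`(0,∞)` of `β ↦ τ2·β·(2^{τ3/β} − 1) + λ·β`. -/
theorem fast_beta_lambda_unique_minimizer
    (τ2 τ3 lam : ℝ) (h2 : 0 < τ2) (h3 : 0 < τ3) (hlam : 0 < lam)
    (βl : ℝ) (hβl : 0 < βl)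
    (hzero : τ2 * (2 : ℝ) ^ (τ3 / βl) * (1 - τ3 * Real.log 2 / βl) - τ2 + lam = 0) :
    ∀ β : ℝ, 0 < β → β ≠ βl →
      τ2 * βl * ((2 : ℝ) ^ (τ3 / βl) - 1) + lam * βl
        < τ2 * β * ((2 : ℝ) ^ (τ3 / β) - 1) + lam * β :=
  fast_beta_lambda_unique_minimizer_general τ2 τ3 lam h2 h3 βl hβl hzero
end

section
/- Let τ1, τ2, τ3, τ4 > 0 and α_min, β_min, γ_min > 0. For λ > 0 define α*_λ = max{(2τ1/λ)^{1/3}, α_min}, γ*_λ = max{(2τ4/λ)^{1/3}, γ_min}, β*_λ = max{β_λ, β_min} where β_λ is the unique zero of g_λ(β) = τ2·2^{τ3/β}·(1 − τ3·ln 2/β) − τ2 + λ on (0,∞), and z_λ = α*_λ + β*_λ + γ*_λ. Then α*_λ, β*_λ, γ*_λ, and hence z_λ, are monotonically non-increasing functions of λ on (0, ∞). -/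
/-!
Substituting `x = τ₃ log 2 / β` turns `g_λ(β)` into `τ₂ (1 - x) eˣ - τ₂ + λ`. Since `(1 - x) eˣ`
has derivative `-x eˣ < 0` for `x > 0` and `x` decreases in `β`, the map `β ↦ g_λ(β) - λ` is
strictly increasing, so its value `-λ` at the zero `β_λ` can only decrease if `β_λ` does.
-/

open Real Set

lemma StrictMonoOn.antitoneOn_of_eqOn_comp {α β γ : Type*} [Preorder α] [LinearOrder β]
    [Preorder γ] {F : β → γ} {G : α → γ} {f : α → β} {s : Set α} {t : Set β}
    (hF : StrictMonoOn F t) (hG : AntitoneOn G s) (hf : MapsTo f s t)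
    (hFf : EqOn (F ∘ f) G s) : AntitoneOn f s := fun a ha b hb hab =>
  (hF.le_iff_le (hf hb) (hf ha)).1 <|
    calc F (f b) = G b := hFf hb
      _ ≤ G a := hG ha hb hab
      _ = F (f a) := (hFf ha).symm

lemma strictAntiOn_one_sub_mul_exp : StrictAntiOn (fun x : ℝ => (1 - x) * exp x) (Ici 0) := by
  refine strictAntiOn_of_deriv_neg (convex_Ici 0) (by fun_prop) fun x hx => ?_
  rw [interior_Ici] at hx
  have hderiv : HasDerivAt (fun x : ℝ => (1 - x) * exp x) (-x * exp x) x :=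
    (((hasDerivAt_id' x).const_sub 1).fun_mul (hasDerivAt_exp x)).congr_deriv (by ring)
  rw [hderiv.deriv]
  exact mul_neg_of_neg_of_pos (neg_neg_of_pos hx) (exp_pos x)

lemma strictMonoOn_rpow_div_mul_one_sub {b τ : ℝ} (hb : 1 < b) (hτ : 0 < τ) :
    StrictMonoOn (fun β : ℝ => b ^ (τ / β) * (1 - τ * log b / β)) (Ioi 0) := by
  have hc : 0 < τ * log b := mul_pos hτ (log_pos hb)
  have hrecip : StrictAntiOn (fun β : ℝ => τ * log b / β) (Ioi 0) :=
    fun _ hx _ _ hxy => div_lt_div_of_pos_left hc hx hxy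
  have hmaps : MapsTo (fun β : ℝ => τ * log b / β) (Ioi 0) (Ici 0) :=
    fun _ hβ => (div_pos hc hβ).le
  refine (strictAntiOn_one_sub_mul_exp.comp hrecip hmaps).congr fun _ _ => ?_
  simp only [Function.comp, rpow_def_of_pos (zero_lt_one.trans hb)]
  ring_nf

lemma antitoneOn_div_rpow {a p : ℝ} (ha : 0 ≤ a) (hp : 0 ≤ p) :
    AntitoneOn (fun x : ℝ => (a / x) ^ p) (Ioi 0) := fun _ hx _ hy hxy =>
  rpow_le_rpow (div_nonneg ha (le_of_lt hy)) (div_le_div_of_nonneg_left ha hx hxy) hp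

theorem fast_candidates_antitone_general
    (τ1 τ2 τ3 τ4 αmin βmin γmin : ℝ)
    (h1 : 0 < τ1) (h2 : 0 < τ2) (h3 : 0 < τ3) (h4 : 0 < τ4)
    (βof : ℝ → ℝ)
    (hβof : ∀ lam : ℝ, 0 < lam → 0 < βof lam ∧
      τ2 * (2 : ℝ) ^ (τ3 / βof lam) * (1 - τ3 * Real.log 2 / βof lam) - τ2 + lam
        = 0) :
    AntitoneOn (fun lam : ℝ => max ((2 * τ1 / lam) ^ ((1 : ℝ) / 3)) αmin)
      (Set.Ioi (0 : ℝ)) ∧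
    AntitoneOn (fun lam : ℝ => max (βof lam) βmin) (Set.Ioi (0 : ℝ)) ∧
    AntitoneOn (fun lam : ℝ => max ((2 * τ4 / lam) ^ ((1 : ℝ) / 3)) γmin)
      (Set.Ioi (0 : ℝ)) ∧
    AntitoneOn (fun lam : ℝ =>
      max ((2 * τ1 / lam) ^ ((1 : ℝ) / 3)) αmin + max (βof lam) βmin +
        max ((2 * τ4 / lam) ^ ((1 : ℝ) / 3)) γmin) (Set.Ioi (0 : ℝ)) := by
  have hg : StrictMonoOn
      (fun β : ℝ => τ2 * (2 : ℝ) ^ (τ3 / β) * (1 - τ3 * log 2 / β) - τ2) (Ioi 0) :=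
    fun _ hx _ hy hxy => by
      have := mul_lt_mul_of_pos_left
        (strictMonoOn_rpow_div_mul_one_sub one_lt_two h3 hx hy hxy) h2
      simp only [mul_assoc] at this ⊢
      linarith
  have hβof_anti : AntitoneOn βof (Ioi 0) :=
    hg.antitoneOn_of_eqOn_comp monotoneOn_id.neg (fun lam h => (hβof lam h).1)
      fun lam h => eq_neg_of_add_eq_zero_left (hβof lam h).2
  have hthird : (0 : ℝ) ≤ 1 / 3 := by norm_num
  have hα := (antitoneOn_div_rpow (by positivity : 0 ≤ 2 * τ1) hthird).max
    (antitoneOn_const (c := αmin))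
  have hγ := (antitoneOn_div_rpow (by positivity : 0 ≤ 2 * τ4) hthird).max
    (antitoneOn_const (c := γmin))
  have hβ := hβof_anti.max (antitoneOn_const (c := βmin))
  exact ⟨hα, hβ, hγ, (hα.add hβ).add hγ⟩

/-- The candidate solutions
`α*_λ = max{(2τ1/λ)^{1/3}, α_min}`, `β*_λ = max{β_λ, β_min}`,
`γ*_λ = max{(2τ4/λ)^{1/3}, γ_min}` (with `β_λ` the unique positive zero of
`g_λ`) and their sum `z_λ` are all monotonically non-increasing in `λ` on
`(0,∞)`. -/
theorem fast_candidates_antitone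
    (τ1 τ2 τ3 τ4 αmin βmin γmin : ℝ)
    (h1 : 0 < τ1) (h2 : 0 < τ2) (h3 : 0 < τ3) (h4 : 0 < τ4)
    (hαmin : 0 < αmin) (hβmin : 0 < βmin) (hγmin : 0 < γmin)
    (βof : ℝ → ℝ)
    (hβof : ∀ lam : ℝ, 0 < lam → 0 < βof lam ∧
      τ2 * (2 : ℝ) ^ (τ3 / βof lam) * (1 - τ3 * Real.log 2 / βof lam) - τ2 + lam
        = 0) :
    AntitoneOn (fun lam : ℝ => max ((2 * τ1 / lam) ^ ((1 : ℝ) / 3)) αmin)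
      (Set.Ioi (0 : ℝ)) ∧
    AntitoneOn (fun lam : ℝ => max (βof lam) βmin) (Set.Ioi (0 : ℝ)) ∧
    AntitoneOn (fun lam : ℝ => max ((2 * τ4 / lam) ^ ((1 : ℝ) / 3)) γmin)
      (Set.Ioi (0 : ℝ)) ∧
    AntitoneOn (fun lam : ℝ =>
      max ((2 * τ1 / lam) ^ ((1 : ℝ) / 3)) αmin + max (βof lam) βmin +
        max ((2 * τ4 / lam) ^ ((1 : ℝ) / 3)) γmin) (Set.Ioi (0 : ℝ)) :=
  fast_candidates_antitone_general τ1 τ2 τ3 τ4 αmin βmin γmin h1 h2 h3 h4 βof hβof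
end

section
/- Let τ1, τ2, τ3, τ4 > 0 and α_min, β_min, γ_min > 0, and let F(α, β, γ) = τ1/α² + τ2·β·(2^{τ3/β} − 1) + τ4/γ². Suppose λ > 0 is such that α* = max{(2τ1/λ)^{1/3}, α_min}, γ* = max{(2τ4/λ)^{1/3}, γ_min}, and β* = max{β_λ, β_min} (where β_λ is the unique zero on (0,∞) of g_λ(β) = τ2·2^{τ3/β}·(1 − τ3·ln 2/β) − τ2 + λ) satisfy α* + β* + γ* = 1. Then (α*, β*, γ*) is a global minimizer of F over the feasible set S = {(α, β, γ) : α + β + γ = 1, α ≥ α_min, β ≥ β_min, γ ≥ γ_min}. -/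
lemma tangent_inv_sq (τ a s : ℝ) (hτ : 0 < τ) (ha : 0 < a) (hs : 0 < s) :
    τ / s ^ 2 - 2 * τ / s ^ 3 * (a - s) ≤ τ / a ^ 2 := by
  have h : τ / s ^ 2 - 2 * τ / s ^ 3 * (a - s) = τ * (3 * s - 2 * a) / s ^ 3 := by
    field_simp; ring
  rw [h, div_le_div_iff₀ (by positivity) (by positivity)]
  nlinarith [mul_nonneg (mul_nonneg hτ.le (sq_nonneg (a - s)))
    (by linarith : (0:ℝ) ≤ 2 * a + s)]

lemma tangent_beta (c b s : ℝ) (hb : 0 < b) (hs : 0 < s) :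
    s * Real.exp (c / s) + Real.exp (c / s) * (1 - c / s) * (b - s)
      ≤ b * Real.exp (c / b) := by
  have e1 : Real.exp (c / b) = Real.exp (c / s) * Real.exp (c / b - c / s) := by
    rw [← Real.exp_add]; ring_nf
  rw [e1]
  have hE : (0:ℝ) < Real.exp (c / s) := Real.exp_pos _
  have key : s + (1 - c / s) * (b - s) ≤ b * Real.exp (c / b - c / s) := by
    have hx : s + (1 - c / s) * (b - s) = b * (c / b - c / s + 1) := by
      field_simp; ring
    rw [hx]
    exact mul_le_mul_of_nonneg_left (Real.add_one_le_exp _) hb.le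
  calc s * Real.exp (c / s) + Real.exp (c / s) * (1 - c / s) * (b - s)
      = Real.exp (c / s) * (s + (1 - c / s) * (b - s)) := by ring
    _ ≤ Real.exp (c / s) * (b * Real.exp (c / b - c / s)) :=
        mul_le_mul_of_nonneg_left key hE.le
    _ = b * (Real.exp (c / s) * Real.exp (c / b - c / s)) := by ring

lemma h_mono (u v : ℝ) (hu : 0 < u) (huv : u ≤ v) :
    Real.exp v * (1 - v) ≤ Real.exp u * (1 - u) := by
  have e1 : Real.exp v = Real.exp u * Real.exp (v - u) := by
    rw [← Real.exp_add]; ring_nf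
  rw [e1]
  have hEu : (0:ℝ) < Real.exp u := Real.exp_pos _
  suffices h : Real.exp (v - u) * (1 - v) ≤ 1 - u by nlinarith
  have h3 : (0:ℝ) < Real.exp (v - u) := Real.exp_pos _
  have h4 : (1:ℝ) ≤ Real.exp (v - u) := Real.one_le_exp (by linarith)
  have h1 : Real.exp (v - u) - Real.exp (v - u) * (v - u) ≤ 1 := by
    have := Real.add_one_le_exp (u - v)
    have h2 : Real.exp (u - v) * Real.exp (v - u) = 1 := by
      rw [← Real.exp_add]; norm_num
    nlinarith [mul_le_mul_of_nonneg_right this h3.le]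
  rcases le_or_gt u 1 with hcase | hcase
  · nlinarith [mul_le_mul_of_nonneg_right h1 (by linarith : (0:ℝ) ≤ 1 - u),
      mul_nonneg (mul_nonneg h3.le (by linarith : (0:ℝ) ≤ v - u)) hu.le]
  · nlinarith [mul_nonneg (by linarith : (0:ℝ) ≤ Real.exp (v - u) - 1)
      (by linarith : (0:ℝ) ≤ v - 1)]

lemma cube_rpow (x : ℝ) (hx : 0 < x) : (x ^ ((1:ℝ)/3)) ^ 3 = x := by
  rw [← Real.rpow_natCast (x ^ ((1:ℝ)/3)) 3, ← Real.rpow_mul hx.le]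
  norm_num

/-- If for some multiplier `λ > 0` the candidates
`α* = max{(2τ1/λ)^{1/3}, α_min}`, `β* = max{β_λ, β_min}`,
`γ* = max{(2τ4/λ)^{1/3}, γ_min}` sum to `1`, then `(α*, β*, γ*)` is a global
minimizer of `F(α,β,γ) = τ1/α² + τ2·β·(2^{τ3/β} − 1) + τ4/γ²` over the simplex
slice `S = {α + β + γ = 1, α ≥ α_min, β ≥ β_min, γ ≥ γ_min}`. -/
theorem fast_kkt_point_is_global_minimizer
    (τ1 τ2 τ3 τ4 αmin βmin γmin lam : ℝ)
    (h1 : 0 < τ1) (h2 : 0 < τ2) (h3 : 0 < τ3) (h4 : 0 < τ4)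
    (hαmin : 0 < αmin) (hβmin : 0 < βmin) (hγmin : 0 < γmin) (hlam : 0 < lam)
    (βl : ℝ) (hβl : 0 < βl)
    (hβlzero : τ2 * (2 : ℝ) ^ (τ3 / βl) * (1 - τ3 * Real.log 2 / βl) - τ2 + lam
      = 0)
    (αs βs γs : ℝ)
    (hαs : αs = max ((2 * τ1 / lam) ^ ((1 : ℝ) / 3)) αmin)
    (hβs : βs = max βl βmin)
    (hγs : γs = max ((2 * τ4 / lam) ^ ((1 : ℝ) / 3)) γmin)
    (hsum : αs + βs + γs = 1) :
    ∀ α β γ : ℝ, α + β + γ = 1 → αmin ≤ α → βmin ≤ β → γmin ≤ γ →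
      τ1 / αs ^ 2 + τ2 * βs * ((2 : ℝ) ^ (τ3 / βs) - 1) + τ4 / γs ^ 2
        ≤ τ1 / α ^ 2 + τ2 * β * ((2 : ℝ) ^ (τ3 / β) - 1) + τ4 / γ ^ 2 := by
  intro α β γ hsum' hα hβ hγ
  have hlog2 : (0:ℝ) < Real.log 2 := Real.log_pos (by norm_num)
  have hc : (0:ℝ) < Real.log 2 * τ3 := mul_pos hlog2 h3
  -- positivity of all variables
  have ha0 : (0:ℝ) < (2 * τ1 / lam) ^ ((1:ℝ)/3) :=
    Real.rpow_pos_of_pos (by positivity) _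
  have hg0 : (0:ℝ) < (2 * τ4 / lam) ^ ((1:ℝ)/3) :=
    Real.rpow_pos_of_pos (by positivity) _
  have hαs0 : 0 < αs := by rw [hαs]; exact lt_max_of_lt_right hαmin
  have hβs0 : 0 < βs := by rw [hβs]; exact lt_max_of_lt_right hβmin
  have hγs0 : 0 < γs := by rw [hγs]; exact lt_max_of_lt_right hγmin
  have hαp : 0 < α := lt_of_lt_of_le hαmin hα
  have hβp : 0 < β := lt_of_lt_of_le hβmin hβ
  have hγp : 0 < γ := lt_of_lt_of_le hγmin hγ
  -- rewrite 2^x as exp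
  have h2exp : ∀ x : ℝ, (2:ℝ) ^ (τ3 / x) = Real.exp (Real.log 2 * τ3 / x) := by
    intro x
    rw [Real.rpow_def_of_pos (by norm_num : (0:ℝ) < 2), mul_div_assoc']
  rw [h2exp β, h2exp βs]
  rw [h2exp βl] at hβlzero
  have hl0 : τ2 * Real.exp (Real.log 2 * τ3 / βl) * (1 - Real.log 2 * τ3 / βl)
      - τ2 + lam = 0 := by
    have e : (1 - τ3 * Real.log 2 / βl) = (1 - Real.log 2 * τ3 / βl) := by ring
    rw [e] at hβlzero; exact hβlzero
  -- cube facts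
  have hcube1 : ((2 * τ1 / lam) ^ ((1:ℝ)/3)) ^ 3 = 2 * τ1 / lam :=
    cube_rpow _ (by positivity)
  have hcube4 : ((2 * τ4 / lam) ^ ((1:ℝ)/3)) ^ 3 = 2 * τ4 / lam :=
    cube_rpow _ (by positivity)
  -- derivative bound for α
  have hαge : (2 * τ1 / lam) ^ ((1:ℝ)/3) ≤ αs := by rw [hαs]; exact le_max_left _ _
  have hγge : (2 * τ4 / lam) ^ ((1:ℝ)/3) ≤ γs := by rw [hγs]; exact le_max_left _ _
  have hdα : 2 * τ1 / αs ^ 3 ≤ lam := by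
    rw [div_le_iff₀ (by positivity)]
    have hm : ((2 * τ1 / lam) ^ ((1:ℝ)/3)) ^ 3 ≤ αs ^ 3 :=
      pow_le_pow_left₀ ha0.le hαge 3
    rw [hcube1] at hm
    calc 2 * τ1 = lam * (2 * τ1 / lam) := by field_simp
      _ ≤ lam * αs ^ 3 := mul_le_mul_of_nonneg_left hm hlam.le
  have hdγ : 2 * τ4 / γs ^ 3 ≤ lam := by
    rw [div_le_iff₀ (by positivity)]
    have hm : ((2 * τ4 / lam) ^ ((1:ℝ)/3)) ^ 3 ≤ γs ^ 3 :=
      pow_le_pow_left₀ hg0.le hγge 3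
    rw [hcube4] at hm
    calc 2 * τ4 = lam * (2 * τ4 / lam) := by field_simp
      _ ≤ lam * γs ^ 3 := mul_le_mul_of_nonneg_left hm hlam.le
  -- KKT sign conditions
  have K1 : 0 ≤ (lam - 2 * τ1 / αs ^ 3) * (α - αs) := by
    rcases le_total αmin ((2 * τ1 / lam) ^ ((1:ℝ)/3)) with h | h
    · have hx : αs = (2 * τ1 / lam) ^ ((1:ℝ)/3) := by rw [hαs, max_eq_left h]
      have : 2 * τ1 / αs ^ 3 = lam := by
        rw [hx, hcube1]; field_simp
      rw [this]; simp
    · have hx : αs = αmin := by rw [hαs, max_eq_right h]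
      exact mul_nonneg (by linarith) (by linarith [hx ▸ hα])
  have K3 : 0 ≤ (lam - 2 * τ4 / γs ^ 3) * (γ - γs) := by
    rcases le_total γmin ((2 * τ4 / lam) ^ ((1:ℝ)/3)) with h | h
    · have hx : γs = (2 * τ4 / lam) ^ ((1:ℝ)/3) := by rw [hγs, max_eq_left h]
      have : 2 * τ4 / γs ^ 3 = lam := by
        rw [hx, hcube4]; field_simp
      rw [this]; simp
    · have hx : γs = γmin := by rw [hγs, max_eq_right h]
      exact mul_nonneg (by linarith) (by linarith [hx ▸ hγ])
  have K2 : 0 ≤ (τ2 * Real.exp (Real.log 2 * τ3 / βs) * (1 - Real.log 2 * τ3 / βs)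
      - τ2 + lam) * (β - βs) := by
    rcases le_total βmin βl with h | h
    · have hx : βs = βl := by rw [hβs, max_eq_left h]
      rw [hx, hl0]; simp
    · have hx : βs = βmin := by rw [hβs, max_eq_right h]
      have hmono := h_mono (Real.log 2 * τ3 / βs) (Real.log 2 * τ3 / βl)
        (by rw [hx]; positivity)
        (by apply div_le_div_of_nonneg_left hc.le hβl; rw [hx]; exact h)
      have := mul_le_mul_of_nonneg_left hmono h2.le
      apply mul_nonneg (by nlinarith) (by linarith [hx ▸ hβ])
  -- tangent line inequalities
  have A1 := tangent_inv_sq τ1 α αs h1 hαp hαs0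
  have A3 := tangent_inv_sq τ4 γ γs h4 hγp hγs0
  have B := tangent_beta (Real.log 2 * τ3) β βs hβp hβs0
  have B' := mul_le_mul_of_nonneg_left B h2.le
  have hlsum : lam * (α + β + γ) = lam * (αs + βs + γs) := by
    rw [hsum, hsum']
  linarith [A1, A3, B', K1, K2, K3, hlsum]
end

section
/- For every c > 0, the function P ↦ P / log₂(1 + c·P) is strictly increasing on (0, ∞). Consequently, for fixed data size D > 0, bandwidth B > 0, channel gain G > 0 and noise density N0 > 0, the transmission energy E_com(P) = D·P / (B·log₂(1 + G·P/(N0·B))) is strictly increasing in the transmit power P on (0, ∞). -/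
/-!
`log (1 + c P)` is strictly concave and vanishes at `P = 0`, so its secant slope
`log (1 + c P) / P` from the origin strictly decreases; `P / log₂ (1 + c P)` is a positive multiple
of the reciprocal of that slope. The energy is `(D / B)` times this function at `c = G / (N0 B)`.
-/

open Real Set

lemma strictAntiOn_log_one_add_mul_div {c : ℝ} (hc : 0 < c) :
    StrictAntiOn (fun P => log (1 + c * P) / P) (Ioi 0) := by
  intro x (hx : 0 < x) y (hy : 0 < y) hxy
  have hslope := strictConcaveOn_log_Ioi.secant_strict_mono (a := 1) (mem_Ioi.2 one_pos)
    (show 0 < 1 + c * x by positivity) (show 0 < 1 + c * y by positivity)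
    (by simp [hc.ne', hx.ne']) (by simp [hc.ne', hy.ne']) (by gcongr)
  simp only [log_one, sub_zero, add_sub_cancel_left, div_mul_eq_div_div_swap] at hslope
  exact (div_lt_div_iff_of_pos_right hc).1 hslope

lemma strictMonoOn_div_logb_one_add_mul {c : ℝ} (hc : 0 < c) :
    StrictMonoOn (fun P => P / logb 2 (1 + c * P)) (Ioi 0) := by
  intro x (hx : 0 < x) y (hy : 0 < y) hxy
  have hrecip : ∀ P, P / logb 2 (1 + c * P) = log 2 * (log (1 + c * P) / P)⁻¹ := by
    intro P
    rw [logb, inv_div, div_div_eq_mul_div, mul_comm, mul_div_assoc]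
  have hslope_pos : ∀ P, 0 < P → 0 < log (1 + c * P) / P := fun P hP =>
    div_pos (log_pos (by simpa using mul_pos hc hP)) hP
  simp only [hrecip]
  gcongr log 2 * ?_
  exact (inv_lt_inv₀ (hslope_pos x hx) (hslope_pos y hy)).2
    (strictAntiOn_log_one_add_mul_div hc hx hy hxy)

/-- For `c > 0`, `P ↦ P / log₂(1 + c·P)` is strictly increasing on
`(0,∞)`; consequently the transmission energy
`E_com(P) = D·P / (B·log₂(1 + G·P/(N0·B)))` is strictly increasing in the
transmit power `P` on `(0,∞)`. -/
theorem fast_transmission_energy_strictMono :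
    (∀ c : ℝ, 0 < c →
      StrictMonoOn (fun P : ℝ => P / Real.logb 2 (1 + c * P))
        (Set.Ioi (0 : ℝ))) ∧
    (∀ D B G N0 : ℝ, 0 < D → 0 < B → 0 < G → 0 < N0 →
      StrictMonoOn
        (fun P : ℝ => D * P / (B * Real.logb 2 (1 + G * P / (N0 * B))))
        (Set.Ioi (0 : ℝ))) := by
  refine ⟨fun c hc => strictMonoOn_div_logb_one_add_mul hc, ?_⟩
  intro D B G N0 hD hB hG hN0 x hx y hy hxy
  have hscale : ∀ P, D * P / (B * logb 2 (1 + G * P / (N0 * B))) =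
      D / B * (P / logb 2 (1 + G / (N0 * B) * P)) := by
    intro P
    rw [mul_div_mul_comm, mul_div_right_comm G]
  simp only [hscale]
  exact mul_lt_mul_of_pos_left
    (strictMonoOn_div_logb_one_add_mul (by positivity) hx hy hxy) (div_pos hD hB)
end

section
/- Fix π > 0 and positive constants K, S, W_e, W_d, B, N0, G, T_max, f_e^max, f_d^max, P^max, and define α_min = K·π²·W_e/(f_e^max·T_max), γ_min = K·π²·W_d/(f_d^max·T_max), β_min = K·π·S/(T_max·B·log₂(1 + G·P^max/(N0·B))). The map sending (α, β, γ) with α, β, γ > 0 to f_e = K·π²·W_e/(α·T_max), f_d = K·π²·W_d/(γ·T_max), P = (N0·B/G)·(2^{KπS/(B·β·T_max)} − 1) is a bijection from {(α, β, γ) ∈ (0,∞)³ : α + β + γ = 1, α ≥ α_min, β ≥ β_min, γ ≥ γ_min} onto {(f_e, f_d, P) : 0 < f_e ≤ f_e^max, 0 < f_d ≤ f_d^max, 0 < P ≤ P^max, T_tot(π, f_e, f_d, P) = T_max}. -/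
/-!
Each resource drives exactly one latency term, and that term is a strictly decreasing bijection of
`(0, ∞)`: encoding time `Kπ²W_e/f_e`, decoding time `Kπ²W_d/f_d` and transmission time
`KπS/r(P)`. Reading the shares `α, β, γ` as these times divided by `T_max` inverts `Φ`
coordinatewise on the positive orthant. By monotonicity each box constraint `f ≤ f^max` becomes
`share ≥ share at f^max`, and since `T_tot(Φ(α, β, γ)) = (α + β + γ) T_max` the latency budget
becomes the simplex condition.
-/

open Set

/-- `r(P) = B · spectralEfficiency G (N0 * B) P`; `powerForEfficiency` is its inverse. -/
noncomputable def spectralEfficiency (G N P : ℝ) : ℝ := Real.logb 2 (1 + G * P / N)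

noncomputable def powerForEfficiency (G N r : ℝ) : ℝ := N / G * (2 ^ r - 1)

section Shannon

open Real

variable {G N : ℝ}

theorem spectralEfficiency_pos (hG : 0 < G) (hN : 0 < N) {P : ℝ} (hP : 0 < P) :
    0 < spectralEfficiency G N P :=
  logb_pos one_lt_two (lt_add_of_pos_right 1 (by positivity))

theorem spectralEfficiency_le_iff (hG : 0 < G) (hN : 0 < N) {P Q : ℝ} (hP : 0 ≤ P) (hQ : 0 ≤ Q) :
    spectralEfficiency G N P ≤ spectralEfficiency G N Q ↔ P ≤ Q := by
  rw [spectralEfficiency, spectralEfficiency,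
    logb_le_logb one_lt_two (by positivity) (by positivity), add_le_add_iff_left,
    div_le_div_iff_of_pos_right hN, mul_le_mul_iff_right₀ hG]

theorem spectralEfficiency_powerForEfficiency (hG : G ≠ 0) (hN : N ≠ 0) (r : ℝ) :
    spectralEfficiency G N (powerForEfficiency G N r) = r := by
  rw [spectralEfficiency, powerForEfficiency]
  field_simp
  simp

theorem powerForEfficiency_spectralEfficiency (hG : 0 < G) (hN : 0 < N) {P : ℝ} (hP : 0 ≤ P) :
    powerForEfficiency G N (spectralEfficiency G N P) = P := by
  rw [spectralEfficiency, powerForEfficiency, rpow_logb two_pos (by norm_num) (by positivity)]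
  field_simp
  ring

theorem powerForEfficiency_pos (hG : 0 < G) (hN : 0 < N) {r : ℝ} (hr : 0 < r) :
    0 < powerForEfficiency G N r :=
  mul_pos (by positivity) (sub_pos.2 (one_lt_rpow one_lt_two hr))

theorem powerForEfficiency_le_iff (hG : 0 < G) (hN : 0 < N) {r P : ℝ} (hr : 0 < r) (hP : 0 ≤ P) :
    powerForEfficiency G N r ≤ P ↔ r ≤ spectralEfficiency G N P := by
  rw [← spectralEfficiency_le_iff hG hN (powerForEfficiency_pos hG hN hr).le hP,
    spectralEfficiency_powerForEfficiency hG.ne' hN.ne']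

end Shannon

theorem div_mul_le_iff_div_mul_le {a T x m : ℝ} (hT : 0 < T) (hx : 0 < x) (hm : 0 < m) :
    a / (x * T) ≤ m ↔ a / (m * T) ≤ x := by
  rw [div_le_comm₀ (by positivity) hm, ← div_le_iff₀ hT, div_div]

theorem powerForEfficiency_div_le_iff {c B T G N β Pmax : ℝ} (hc : 0 < c) (hB : 0 < B)
    (hT : 0 < T) (hG : 0 < G) (hN : 0 < N) (hβ : 0 < β) (hPmax : 0 < Pmax) :
    powerForEfficiency G N (c / (B * β * T)) ≤ Pmax ↔
      c / (T * B * spectralEfficiency G N Pmax) ≤ β := by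
  rw [powerForEfficiency_le_iff hG hN (by positivity) hPmax.le,
    show B * β * T = β * (T * B) by ring,
    div_mul_le_iff_div_mul_le (by positivity) hβ (spectralEfficiency_pos hG hN hPmax),
    mul_comm (spectralEfficiency G N Pmax)]

noncomputable section Allocation

variable (a d c B T G N : ℝ)

/-- The shares are ordered `(α, β, γ)` = (encoding, transmission, decoding) but the resources
`(f_e, f_d, P)`, so the transmission share `p.2.1` determines the last component. -/
def resourcesOfShares (p : ℝ × ℝ × ℝ) : ℝ × ℝ × ℝ :=
  (a / (p.1 * T), d / (p.2.2 * T), powerForEfficiency G N (c / (B * p.2.1 * T)))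

def sharesOfResources (q : ℝ × ℝ × ℝ) : ℝ × ℝ × ℝ :=
  (a / (q.1 * T), c / (B * spectralEfficiency G N q.2.2 * T), d / (q.2.1 * T))

variable {a d c B T G N}

theorem bijOn_resourcesOfShares (ha : 0 < a) (hd : 0 < d) (hc : 0 < c) (hB : 0 < B) (hT : 0 < T)
    (hG : 0 < G) (hN : 0 < N) :
    BijOn (resourcesOfShares a d c B T G N) {p | 0 < p.1 ∧ 0 < p.2.1 ∧ 0 < p.2.2}
      {q | 0 < q.1 ∧ 0 < q.2.1 ∧ 0 < q.2.2} := by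
  refine InvOn.bijOn (f' := sharesOfResources a d c B T G N) ⟨?_, ?_⟩ ?_ ?_
  · rintro ⟨α, β, γ⟩ -
    simp only [resourcesOfShares, sharesOfResources,
      spectralEfficiency_powerForEfficiency hG.ne' hN.ne']
    ext <;> field_simp
  · rintro ⟨fe, fd, P⟩ ⟨hfe, hfd, hP⟩
    have := spectralEfficiency_pos hG hN hP
    simp only [resourcesOfShares, sharesOfResources]
    ext <;> field_simp
    exact powerForEfficiency_spectralEfficiency hG hN hP.le
  · rintro ⟨α, β, γ⟩ ⟨hα, hβ, hγ⟩
    exact ⟨div_pos ha (by positivity), div_pos hd (by positivity),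
      powerForEfficiency_pos hG hN (by positivity)⟩
  · rintro ⟨fe, fd, P⟩ ⟨hfe, hfd, hP⟩
    exact ⟨div_pos ha (by positivity),
      div_pos hc (mul_pos (mul_pos hB (spectralEfficiency_pos hG hN hP)) hT),
      div_pos hd (by positivity)⟩

theorem latency_resourcesOfShares {k We Wd : ℝ} (hk : k ≠ 0) (hWe : We ≠ 0) (hWd : Wd ≠ 0)
    (hc : c ≠ 0) (hB : B ≠ 0) (hT : T ≠ 0) (hG : G ≠ 0) (hN : N ≠ 0) (p : ℝ × ℝ × ℝ) :
    let q := resourcesOfShares (k * We) (k * Wd) c B T G N p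
    k * (We / q.1 + Wd / q.2.1) + c / (B * spectralEfficiency G N q.2.2) =
      (p.1 + p.2.1 + p.2.2) * T := by
  simp only [resourcesOfShares, spectralEfficiency_powerForEfficiency hG hN]
  field_simp
  ring

end Allocation

/-- The change of variables
`(α,β,γ) ↦ (f_e, f_d, P) = (Kπ²W_e/(αT_max), Kπ²W_d/(γT_max),
(N0·B/G)·(2^{KπS/(B·β·T_max)} − 1))` is a bijection from the simplex slice
`{α + β + γ = 1, α ≥ α_min, β ≥ β_min, γ ≥ γ_min}` (with `α_min, β_min, γ_min`
given by Eqn. (16)) onto the set of resource allocations satisfying the box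
constraints with total latency exactly `T_max`. -/
theorem fast_time_splitting_bijection
    (K S We Wd B N0 G Tmax π femax fdmax Pmax : ℝ)
    (hK : 0 < K) (hS : 0 < S) (hWe : 0 < We) (hWd : 0 < Wd)
    (hB : 0 < B) (hN0 : 0 < N0) (hG : 0 < G) (hTmax : 0 < Tmax) (hπ : 0 < π)
    (hfemax : 0 < femax) (hfdmax : 0 < fdmax) (hPmax : 0 < Pmax)
    (αmin βmin γmin : ℝ)
    (hαmin : αmin = K * π ^ 2 * We / (femax * Tmax))
    (hγmin : γmin = K * π ^ 2 * Wd / (fdmax * Tmax))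
    (hβmin : βmin
      = K * π * S / (Tmax * B * Real.logb 2 (1 + G * Pmax / (N0 * B))))
    (Φ : ℝ × ℝ × ℝ → ℝ × ℝ × ℝ)
    (hΦ : ∀ p : ℝ × ℝ × ℝ, Φ p
      = (K * π ^ 2 * We / (p.1 * Tmax), K * π ^ 2 * Wd / (p.2.2 * Tmax),
          (N0 * B / G) *
            ((2 : ℝ) ^ (K * π * S / (B * p.2.1 * Tmax)) - 1)))
    (Ttot : ℝ → ℝ → ℝ → ℝ)
    (hTtot : ∀ fe fd P, Ttot fe fd P
      = K * π ^ 2 * (We / fe + Wd / fd) +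
          K * π * S / (B * Real.logb 2 (1 + G * P / (N0 * B)))) :
    Set.BijOn Φ
      {p : ℝ × ℝ × ℝ | 0 < p.1 ∧ 0 < p.2.1 ∧ 0 < p.2.2 ∧
        p.1 + p.2.1 + p.2.2 = 1 ∧ αmin ≤ p.1 ∧ βmin ≤ p.2.1 ∧ γmin ≤ p.2.2}
      {q : ℝ × ℝ × ℝ | 0 < q.1 ∧ q.1 ≤ femax ∧ 0 < q.2.1 ∧ q.2.1 ≤ fdmax ∧
        0 < q.2.2 ∧ q.2.2 ≤ Pmax ∧ Ttot q.1 q.2.1 q.2.2 = Tmax} := by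
  have hN : 0 < N0 * B := by positivity
  have hΦ' : Φ = resourcesOfShares (K * π ^ 2 * We) (K * π ^ 2 * Wd) (K * π * S) B Tmax G
      (N0 * B) := funext hΦ
  have hbij : BijOn Φ {p | 0 < p.1 ∧ 0 < p.2.1 ∧ 0 < p.2.2}
      {q | 0 < q.1 ∧ 0 < q.2.1 ∧ 0 < q.2.2} :=
    hΦ' ▸ bijOn_resourcesOfShares (by positivity) (by positivity) (by positivity) hB hTmax hG hN
  convert hbij.subset_right ?_ using 1
  · ext p
    simp only [mem_inter_iff, mem_preimage, mem_ofPred_eq]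
    by_cases hp : 0 < p.1 ∧ 0 < p.2.1 ∧ 0 < p.2.2
    case neg => tauto
    obtain ⟨hα, hβ, hγ⟩ := hp
    obtain ⟨hfe, hfd, hP⟩ := hbij.mapsTo ⟨hα, hβ, hγ⟩
    have hlatency : Ttot (Φ p).1 (Φ p).2.1 (Φ p).2.2 = (p.1 + p.2.1 + p.2.2) * Tmax := by
      rw [hTtot, hΦ']
      exact latency_resourcesOfShares (by positivity) hWe.ne' hWd.ne' (by positivity) hB.ne'
        hTmax.ne' hG.ne' hN.ne' p
    have hfe_le : (Φ p).1 ≤ femax ↔ αmin ≤ p.1 := by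
      rw [hΦ', hαmin]; exact div_mul_le_iff_div_mul_le hTmax hα hfemax
    have hfd_le : (Φ p).2.1 ≤ fdmax ↔ γmin ≤ p.2.2 := by
      rw [hΦ', hγmin]; exact div_mul_le_iff_div_mul_le hTmax hγ hfdmax
    have hP_le : (Φ p).2.2 ≤ Pmax ↔ βmin ≤ p.2.1 := by
      rw [hΦ', hβmin]; exact powerForEfficiency_div_le_iff (by positivity) hB hTmax hG hN hβ hPmax
    rw [hlatency, mul_eq_right₀ hTmax.ne', hfe_le, hfd_le, hP_le]
    tauto
  · exact fun q hq => ⟨hq.1, hq.2.2.1, hq.2.2.2.2.1⟩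
end
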